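/- arXiv:1308.6723 — 8 statements merged into one kernel-verified Lean document; each statement's English description precedes it below -/
import Mathlib

section
/- Let q be a power of an odd prime p, let k ∈ F_p with k ≠ 0, and let x ∈ P¹(F_q). If θ_k^t(x) is θ_k-periodic for some nonnegative integer t, then θ_{-k}^t(x) is θ_{-k}-periodic. -/
/- The map `θ_k` on the projective line `P¹(F) = F ∪ {∞}`, where `∞` is
modelled by `none` and elements of `F` by `some x`:
`θ_k(0) = θ_k(∞) = ∞` and `θ_k(x) = k·(x + x⁻¹)` for `x ≠ 0`. -/
open Classical in
noncomputable def theta {F : Type*} [Field F] (k : F) : Option F → Option F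
  | none => none
  | some x => if x = 0 then none else some (k * (x + x⁻¹))

/-- An element `y ∈ P¹(F_q)` is `θ_k`-periodic if `θ_k^r(y) = y` for some `r ≥ 1`. -/
def IsThetaPeriodic {F : Type*} [Field F] (k : F) (y : Option F) : Prop :=
  ∃ r : ℕ, 1 ≤ r ∧ (theta k)^[r] y = y

/-- Pointwise negation on `P¹`. -/
def pneg {F : Type*} [Field F] : Option F → Option F := Option.map (fun x => -x)

lemma pneg_pneg {F : Type*} [Field F] (y : Option F) : pneg (pneg y) = y := by
  cases y <;> simp [pneg]

lemma pneg_invol {F : Type*} [Field F] :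
    (pneg : Option F → Option F) ∘ pneg = id := funext pneg_pneg

lemma theta_neg {F : Type*} [Field F] (k : F) :
    theta (-k) = pneg ∘ theta k := by
  funext y
  cases y with
  | none => simp [theta, pneg]
  | some a =>
    by_cases ha : a = 0 <;> simp [theta, pneg, ha] <;> ring

lemma theta_pneg_comm {F : Type*} [Field F] (k : F) :
    Function.Commute (theta k) (pneg : Option F → Option F) := fun y => by
  cases y with
  | none => simp [theta, pneg]
  | some a =>
    by_cases ha : a = 0 <;> simp [theta, pneg, ha] <;> ring

lemma theta_neg_iter {F : Type*} [Field F] (k : F) (r : ℕ) :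
    (theta (-k))^[r] = pneg^[r] ∘ (theta k)^[r] := by
  rw [theta_neg, (theta_pneg_comm k).symm.comp_iterate]

lemma pneg_iter_iter {F : Type*} [Field F] (n : ℕ) (y : Option F) :
    pneg^[2 * n] y = y := by
  induction n with
  | zero => simp
  | succ m ih =>
    rw [Nat.mul_succ, Function.iterate_add_apply]
    simp [pneg_pneg, ih]

/-- For `q` a power of an odd prime `p` (here `F` is a finite field that is an
algebra over `F_p = ZMod p`), `k ∈ F_p` nonzero and `x ∈ P¹(F_q)`:
if `θ_k^t(x)` is `θ_k`-periodic for some `t ≥ 0`, then `θ_{-k}^t(x)` is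
`θ_{-k}`-periodic. -/
theorem theta_neg_periodic_of_theta_periodic (p : ℕ) (hp : p.Prime) (hodd : Odd p)
    (F : Type*) [Field F] [Fintype F] [Algebra (ZMod p) F]
    (k : ZMod p) (hk : k ≠ 0) (x : Option F) (t : ℕ)
    (h : IsThetaPeriodic (algebraMap (ZMod p) F k)
      ((theta (algebraMap (ZMod p) F k))^[t] x)) :
    IsThetaPeriodic (-(algebraMap (ZMod p) F k))
      ((theta (-(algebraMap (ZMod p) F k)))^[t] x) := by
  set κ := algebraMap (ZMod p) F k
  obtain ⟨r, hr1, hr⟩ := h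
  refine ⟨2 * r, by omega, ?_⟩
  have hiter : ∀ m y, (theta (-κ))^[m] y = pneg^[m] ((theta κ)^[m] y) := by
    intro m y; rw [theta_neg_iter]; rfl
  rw [hiter, hiter]
  have hcomm : ∀ m n (y : Option F),
      (theta κ)^[m] (pneg^[n] y) = pneg^[n] ((theta κ)^[m] y) := by
    intro m n y
    exact ((theta_pneg_comm κ).iterate_iterate m n) y
  rw [hcomm]
  have h2r : (theta κ)^[2 * r] ((theta κ)^[t] x) = (theta κ)^[t] x := by
    rw [two_mul, Function.iterate_add_apply, hr, hr]
  rw [h2r, pneg_iter_iter]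
end

section
/- Let p be an odd prime, k ∈ F_p with k ≠ 0, and let f be a monic irreducible polynomial of degree n over F_p with f ∉ {x, x+1, x-1}. Let α ∈ F_{p^n} be a root of f. If the set of roots of f (in F_{p^n}) is not closed under inversion, then the minimal polynomial of k·(α + α⁻¹) over F_p has degree n. -/
/-!
Let `E = 𝔽_p⟮θ⟯`, which contains `α + α⁻¹` since `k ≠ 0`. The element `α` is a root of
`X² - (α + α⁻¹) X + 1 ∈ E[X]`, whose other root is `α⁻¹`. If `α ∈ E`, then `E ⊇ 𝔽_p⟮α⟯`, which
is all of `𝔽_{p^n}`, so `θ` has degree `n`. Otherwise this quadratic is the minimal polynomial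
of `α` over `E`, so `α⁻¹` is a root of `f`, i.e. a Galois conjugate of `α`; applying the Galois
group then shows that the inverse of every root of `f` is again a root.
-/

open Polynomial IntermediateField

section

variable {K L : Type*} [Field K] [Field L] [Algebra K L]

theorem minpoly_inv_eq_of_minpoly_eq [Normal K L] {x y : L} (h : minpoly K x = minpoly K y) :
    minpoly K x⁻¹ = minpoly K y⁻¹ := by
  obtain ⟨σ, rfl⟩ := (Normal.minpoly_eq_iff_mem_orbit L).mp h
  rw [← minpoly.algEquiv_eq σ y⁻¹, map_inv₀]
  rfl

theorem minpoly_eq_of_add_inv_eq_algebraMap {x : L} (hx : x ≠ 0) {s : K}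
    (hs : x + x⁻¹ = algebraMap K L s) (hxK : x ∉ (algebraMap K L).range) :
    minpoly K x = X ^ 2 - C s * X + 1 := by
  have hq : (X ^ 2 - C s * X + 1 : K[X]).Monic := by monicity!
  have hqdeg : (X ^ 2 - C s * X + 1 : K[X]).natDegree = 2 := by compute_degree!
  have hqx : aeval x (X ^ 2 - C s * X + 1 : K[X]) = 0 := by
    simp only [map_add, map_sub, map_mul, map_pow, aeval_X, aeval_C, map_one, ← hs]
    field_simp
    ring
  have hint : IsIntegral K x := ⟨_, hq, hqx⟩
  refine (eq_of_monic_of_dvd_of_natDegree_le (minpoly.monic hint) hq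
    (minpoly.dvd K x hqx) ?_).symm
  rw [hqdeg]
  exact (minpoly.two_le_natDegree_iff hint).mpr hxK

theorem aeval_inv_minpoly_eq_zero_of_add_inv_mem {E : IntermediateField K L} {x : L}
    (hx : x ≠ 0) (hs : x + x⁻¹ ∈ E) (hxE : x ∉ E) :
    aeval x⁻¹ (minpoly K x) = 0 := by
  have hE : minpoly E x = X ^ 2 - C ⟨_, hs⟩ * X + 1 :=
    minpoly_eq_of_add_inv_eq_algebraMap hx rfl (by simpa using hxE)
  rw [← aeval_map_algebraMap E]
  refine aeval_eq_zero_of_dvd_aeval_eq_zero (minpoly.dvd_map_of_isScalarTower K E x) ?_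
  simp only [hE, map_add, map_sub, map_mul, map_pow, aeval_X, aeval_C, map_one,
    IntermediateField.algebraMap_apply]
  field_simp
  ring

theorem natDegree_minpoly_eq_finrank_of_mem_adjoin [FiniteDimensional K L] {x y : L}
    (hxy : x ∈ K⟮y⟯) (hx : (minpoly K x).natDegree = Module.finrank K L) :
    (minpoly K y).natDegree = Module.finrank K L := by
  refine le_antisymm (minpoly.natDegree_le y) ?_
  rw [← hx, ← adjoin.finrank (.of_finite K x), ← adjoin.finrank (.of_finite K y)]
  exact finrank_le_of_le_right (adjoin_simple_le_iff.mpr hxy)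

end

theorem minpoly_theta_natDegree_of_not_inverse_closed_general (p n : ℕ) [Fact p.Prime]
    (k : ZMod p) (hk : k ≠ 0)
    (f : Polynomial (ZMod p)) (hmonic : f.Monic) (hirr : Irreducible f)
    (hdeg : f.natDegree = n)
    (hne1 : f ≠ Polynomial.X)
    (α : GaloisField p n) (hroot : Polynomial.aeval α f = 0)
    (hnotinv : ¬ ∀ γ : GaloisField p n,
      Polynomial.aeval γ f = 0 → Polynomial.aeval γ⁻¹ f = 0) :
    (minpoly (ZMod p)
      (algebraMap (ZMod p) (GaloisField p n) k * (α + α⁻¹))).natDegree = n := by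
  have hminpoly {γ : GaloisField p n} (hγ : aeval γ f = 0) : minpoly (ZMod p) γ = f :=
    (minpoly.eq_of_irreducible_of_monic hirr hγ hmonic).symm
  have hα0 : α ≠ 0 := by
    rintro rfl
    exact hne1 (by rw [← hminpoly hroot, minpoly.zero])
  have hfinrank : Module.finrank (ZMod p) (GaloisField p n) = n :=
    GaloisField.finrank p (hdeg ▸ hirr.natDegree_pos.ne')
  set θ := algebraMap (ZMod p) (GaloisField p n) k * (α + α⁻¹)
  have hsum : α + α⁻¹ ∈ (ZMod p)⟮θ⟯ := by
    have : α + α⁻¹ = k⁻¹ • θ := by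
      rw [Algebra.smul_def, map_inv₀, ← mul_assoc, inv_mul_cancel₀ (by simpa using hk), one_mul]
    exact this ▸ smul_mem _ (mem_adjoin_simple_self _ θ)
  by_cases hmem : α ∈ (ZMod p)⟮θ⟯
  · exact (natDegree_minpoly_eq_finrank_of_mem_adjoin hmem
      (by rw [hminpoly hroot, hdeg, hfinrank])).trans hfinrank
  · refine absurd (fun γ hγ => ?_) hnotinv
    have hαinv : minpoly (ZMod p) α⁻¹ = f :=
      hminpoly (hminpoly hroot ▸ aeval_inv_minpoly_eq_zero_of_add_inv_mem hα0 hsum hmem)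
    rw [← hαinv, ← minpoly_inv_eq_of_minpoly_eq ((hminpoly hγ).trans (hminpoly hroot).symm)]
    exact minpoly.aeval _ _

/-- Let `p` be an odd prime, `k ∈ F_p` nonzero, and `f` a monic irreducible
polynomial of degree `n` over `F_p` with `f ∉ {x, x+1, x-1}`. Let
`α ∈ F_{p^n}` be a root of `f`. If the set of roots of `f` in `F_{p^n}` is
not closed under inversion, then the minimal polynomial of `k·(α + α⁻¹)` over
`F_p` has degree `n`. -/
theorem minpoly_theta_natDegree_of_not_inverse_closed (p n : ℕ) [Fact p.Prime]
    (hodd : Odd p) (k : ZMod p) (hk : k ≠ 0)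
    (f : Polynomial (ZMod p)) (hmonic : f.Monic) (hirr : Irreducible f)
    (hdeg : f.natDegree = n)
    (hne1 : f ≠ Polynomial.X) (hne2 : f ≠ Polynomial.X + 1)
    (hne3 : f ≠ Polynomial.X - 1)
    (α : GaloisField p n) (hroot : Polynomial.aeval α f = 0)
    (hnotinv : ¬ ∀ γ : GaloisField p n,
      Polynomial.aeval γ f = 0 → Polynomial.aeval γ⁻¹ f = 0) :
    (minpoly (ZMod p)
      (algebraMap (ZMod p) (GaloisField p n) k * (α + α⁻¹))).natDegree = n :=
  minpoly_theta_natDegree_of_not_inverse_closed_general p n k hk f hmonic hirr hdeg hne1 α hroot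
    hnotinv
end

section
/- Let p be an odd prime, k ∈ F_p with k ≠ 0, and let f be a monic irreducible polynomial of degree n over F_p with f ∉ {x, x+1, x-1}. Let α ∈ F_{p^n} be a root of f. If the set of roots of f (in F_{p^n}) is closed under inversion, then n is even and the minimal polynomial of k·(α + α⁻¹) over F_p has degree n/2. -/
/-!
Since `f` is the minimal polynomial of `α` and has degree `n`, `α` generates `𝔽_{p^n}`; as `α⁻¹`
is another root of `f`, some automorphism `σ` maps `α` to `α⁻¹`, and `α⁻¹ ≠ α` because
`α ∉ {0, 1, -1}`. The field `F = 𝔽_p(θ) = 𝔽_p(α + α⁻¹)` is fixed by `σ`, so it does not contain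
`α`, while `α` is a root of `X² - (α + α⁻¹) X + 1 ∈ F[X]`. Hence `[𝔽_{p^n} : F] = 2` and
`[F : 𝔽_p] = n / 2`.
-/

open Polynomial IntermediateField Module

theorem AlgEquiv.apply_eq_self_of_mem_adjoin_simple {K L : Type*} [Field K] [Field L]
    [Algebra K L] (σ : L ≃ₐ[K] L) {θ x : L} (hθ : σ θ = θ) (hx : x ∈ K⟮θ⟯) : σ x = x :=
  congr($(adjoin_algHom_ext K (φ₁ := (σ : L →ₐ[K] L).comp K⟮θ⟯.val) (φ₂ := K⟮θ⟯.val)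
    (by simpa using hθ)) ⟨x, hx⟩)

namespace IntermediateField

variable {K L : Type*} [Field K] [Field L] [Algebra K L]

theorem adjoin_simple_algebraMap_mul {c : K} (hc : c ≠ 0) (x : L) :
    K⟮algebraMap K L c * x⟯ = K⟮x⟯ := by
  refine le_antisymm (adjoin_simple_le_iff.2 ?_) (adjoin_simple_le_iff.2 ?_)
  · exact mul_mem (algebraMap_mem _ c) (mem_adjoin_simple_self K x)
  · have hcx := mul_mem (algebraMap_mem K⟮algebraMap K L c * x⟯ c⁻¹)
      (mem_adjoin_simple_self K (algebraMap K L c * x))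
    rwa [← mul_assoc, ← map_mul, inv_mul_cancel₀ hc, map_one, one_mul] at hcx

theorem minpoly_natDegree_le_two_of_add_inv_mem {F : IntermediateField K L} {α : L}
    (hα : α ≠ 0) (h : α + α⁻¹ ∈ F) : (minpoly F α).natDegree ≤ 2 := by
  set q : F[X] := X ^ 2 - C ⟨α + α⁻¹, h⟩ * X + 1
  have hq : q.natDegree = 2 := by
    simp only [q]; compute_degree!
  have hqα : aeval α q = 0 := by
    simp only [q, map_add, map_sub, map_mul, map_pow, aeval_X, aeval_C, map_one]
    show α ^ 2 - (α + α⁻¹) * α + 1 = 0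
    field_simp
    ring
  have hq0 : q ≠ 0 := by
    rintro hq0; simp [hq0] at hq
  exact (natDegree_le_natDegree (minpoly.degree_le_of_ne_zero F α hq0 hqα)).trans hq.le

theorem finrank_le_two_of_add_inv_mem [FiniteDimensional K L] {α : L} (hgen : K⟮α⟯ = ⊤)
    (hα : α ≠ 0) {F : IntermediateField K L} (h : α + α⁻¹ ∈ F) : finrank F L ≤ 2 := by
  have hgenF : F⟮α⟯ = ⊤ := by
    rw [← restrictScalars_eq_top_iff (K := K), restrictScalars_adjoin_eq_sup, hgen, sup_top_eq]
  rw [← finrank_top', ← hgenF, adjoin.finrank (.of_finite F α)]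
  exact minpoly_natDegree_le_two_of_add_inv_mem hα h

theorem finrank_adjoin_add_inv_eq_two [FiniteDimensional K L] {α : L} (hgen : K⟮α⟯ = ⊤)
    (σ : L ≃ₐ[K] L) (hσ : σ α = α⁻¹) (hne : α⁻¹ ≠ α) : finrank K⟮α + α⁻¹⟯ L = 2 := by
  have hα : α ≠ 0 := by
    rintro rfl
    exact hne inv_zero
  have hfix : σ (α + α⁻¹) = α + α⁻¹ := by
    rw [map_add, map_inv₀, hσ, inv_inv, add_comm]
  have hle := finrank_le_two_of_add_inv_mem hgen hα (mem_adjoin_simple_self K (α + α⁻¹))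
  have hne_one : finrank K⟮α + α⁻¹⟯ L ≠ 1 := by
    rw [Ne, finrank_eq_one_iff_eq_top]
    intro htop
    exact hne (hσ ▸ σ.apply_eq_self_of_mem_adjoin_simple hfix (htop ▸ mem_top))
  have hpos : 0 < finrank K⟮α + α⁻¹⟯ L := finrank_pos
  omega

end IntermediateField

theorem minpoly_theta_natDegree_of_inverse_closed_general (p n : ℕ) [Fact p.Prime]
    (k : ZMod p) (hk : k ≠ 0)
    (f : Polynomial (ZMod p)) (hmonic : f.Monic) (hirr : Irreducible f)
    (hdeg : f.natDegree = n)
    (hne1 : f ≠ Polynomial.X) (hne2 : f ≠ Polynomial.X + 1)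
    (hne3 : f ≠ Polynomial.X - 1)
    (α : GaloisField p n) (hroot : Polynomial.aeval α f = 0)
    (hinv : ∀ γ : GaloisField p n,
      Polynomial.aeval γ f = 0 → Polynomial.aeval γ⁻¹ f = 0) :
    Even n ∧
      (minpoly (ZMod p)
        (algebraMap (ZMod p) (GaloisField p n) k * (α + α⁻¹))).natDegree = n / 2 := by
  have hfα : f = minpoly (ZMod p) α := minpoly.eq_of_irreducible_of_monic hirr hroot hmonic
  have hfα' : f = minpoly (ZMod p) α⁻¹ :=
    minpoly.eq_of_irreducible_of_monic hirr (hinv α hroot) hmonic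
  have hne : α⁻¹ ≠ α := by
    intro h
    rcases inv_eq_self₀.1 h with rfl | rfl | rfl
    · apply hne2
      rw [hfα, ← map_one (algebraMap (ZMod p) _), ← map_neg, minpoly.eq_X_sub_C, map_neg,
        map_one, sub_neg_eq_add]
    · exact hne1 (hfα.trans (minpoly.zero _ _))
    · exact hne3 (hfα.trans (minpoly.one _ _))
  have hn : n ≠ 0 := by
    have := minpoly.natDegree_pos (IsIntegral.of_finite (ZMod p) α)
    rw [← hfα, hdeg] at this
    omega
  have hgen : (ZMod p)⟮α⟯ = ⊤ := eq_of_le_of_finrank_eq le_top <| by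
    rw [adjoin.finrank (.of_finite _ α), ← hfα, hdeg, finrank_top', GaloisField.finrank p hn]
  obtain ⟨σ, hσ⟩ := (Normal.minpoly_eq_iff_mem_orbit (GaloisField p n)).1 (hfα'.symm.trans hfα)
  have hrel := finrank_adjoin_add_inv_eq_two hgen σ hσ hne
  have htower := finrank_mul_finrank (ZMod p) (ZMod p)⟮α + α⁻¹⟯ (GaloisField p n)
  rw [hrel, GaloisField.finrank p hn] at htower
  rw [← adjoin.finrank (.of_finite _ _), adjoin_simple_algebraMap_mul hk]
  exact ⟨⟨finrank (ZMod p) (ZMod p)⟮α + α⁻¹⟯, by omega⟩, by omega⟩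

/-- Let `p` be an odd prime, `k ∈ F_p` nonzero, and `f` a monic irreducible
polynomial of degree `n` over `F_p` with `f ∉ {x, x+1, x-1}`. Let
`α ∈ F_{p^n}` be a root of `f`. If the set of roots of `f` in `F_{p^n}` is
closed under inversion, then `n` is even and the minimal polynomial of
`k·(α + α⁻¹)` over `F_p` has degree `n/2`. -/
theorem minpoly_theta_natDegree_of_inverse_closed (p n : ℕ) [Fact p.Prime]
    (hodd : Odd p) (k : ZMod p) (hk : k ≠ 0)
    (f : Polynomial (ZMod p)) (hmonic : f.Monic) (hirr : Irreducible f)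
    (hdeg : f.natDegree = n)
    (hne1 : f ≠ Polynomial.X) (hne2 : f ≠ Polynomial.X + 1)
    (hne3 : f ≠ Polynomial.X - 1)
    (α : GaloisField p n) (hroot : Polynomial.aeval α f = 0)
    (hinv : ∀ γ : GaloisField p n,
      Polynomial.aeval γ f = 0 → Polynomial.aeval γ⁻¹ f = 0) :
    Even n ∧
      (minpoly (ZMod p)
        (algebraMap (ZMod p) (GaloisField p n) k * (α + α⁻¹))).natDegree = n / 2 :=
  minpoly_theta_natDegree_of_inverse_closed_general p n k hk f hmonic hirr hdeg hne1 hne2 hne3 α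
    hroot hinv
end

section
/- Let p be an odd prime, k ∈ F_p with k ≠ 0, and let f be a monic irreducible polynomial of degree n ≥ 1 over F_p. Then 0 is not a root of f^{Q_k}, and the set of roots of f^{Q_k} (in an algebraic closure of F_p) is closed under inversion: if γ is a root of f^{Q_k}, then so is γ⁻¹. -/
/-! At `0` only the top term `f_n k^n (x²+1)^n` of `f^{Q_k}` survives, leaving the leading
coefficient of `f`. Away from `0`, `f^{Q_k}(x) = (x/k)^n f(k(x + x⁻¹))`, and `x + x⁻¹` is invariant
under `x ↦ x⁻¹`, so `f^{Q_k}(x⁻¹) = x⁻²ⁿ f^{Q_k}(x)`. Both facts hold over any field and pass to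
the algebraic closure because the transform commutes with field homomorphisms. -/

/-- The `Q_k`-transform of a polynomial `f` of degree `n` with coefficients
`f_0, …, f_n`: `f^{Q_k}(x) = k^{-n} · Σ_{j=0}^{n} f_j k^j (x²+1)^j x^{n-j}`,
which equals `(x/k)^n · f(k·(x + x⁻¹))` for all `x ≠ 0`. -/
noncomputable def Qtransform {F : Type*} [Field F] (k : F) (f : Polynomial F) :
    Polynomial F :=
  Polynomial.C (k⁻¹ ^ f.natDegree) *
    ∑ j ∈ Finset.range (f.natDegree + 1),
      Polynomial.C (f.coeff j * k ^ j) * (Polynomial.X ^ 2 + 1) ^ j *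
        Polynomial.X ^ (f.natDegree - j)

open Polynomial

section

variable {F : Type*} [Field F] {k : F}

theorem map_Qtransform {K : Type*} [Field K] (φ : F →+* K) (f : F[X]) :
    (Qtransform k f).map φ = Qtransform (φ k) (f.map φ) := by
  simp [Qtransform, Polynomial.map_sum, natDegree_map]

theorem eval_zero_Qtransform (hk : k ≠ 0) (f : F[X]) :
    (Qtransform k f).eval 0 = f.leadingCoeff := by
  rw [Qtransform, eval_mul, eval_C, eval_finsetSum, Finset.sum_range_succ,
    Finset.sum_eq_zero fun j hj => ?_]
  · simp only [eval_mul, eval_C, eval_pow, eval_add, eval_X, eval_one, Nat.sub_self, pow_zero,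
      mul_one, zero_pow two_ne_zero, zero_add, one_pow, zero_add]
    rw [inv_pow, mul_left_comm, inv_mul_cancel₀ (pow_ne_zero _ hk), mul_one]
    rfl
  · have hexp : f.natDegree - j ≠ 0 := Nat.sub_ne_zero_of_lt (Finset.mem_range.mp hj)
    simp [hexp]

theorem eval_Qtransform_of_ne_zero (hk : k ≠ 0) (f : F[X]) {x : F} (hx : x ≠ 0) :
    (Qtransform k f).eval x = (x / k) ^ f.natDegree * f.eval (k * (x + x⁻¹)) := by
  rw [Qtransform, eval_mul, eval_C, eval_finsetSum, eval_eq_sum_range, Finset.mul_sum,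
    Finset.mul_sum]
  refine Finset.sum_congr rfl fun j hj => ?_
  obtain ⟨m, hm⟩ := Nat.exists_eq_add_of_le (Finset.mem_range_succ_iff.mp hj)
  rw [hm, Nat.add_sub_cancel_left]
  simp only [eval_mul, eval_C, eval_pow, eval_add, eval_X, eval_one]
  have hx_add_inv : x + x⁻¹ = (x ^ 2 + 1) / x := by field_simp
  rw [hx_add_inv, inv_pow, div_pow, mul_pow, div_pow]
  field_simp
  ring

theorem isRoot_inv_of_isRoot_Qtransform (hk : k ≠ 0) {f : F[X]} {x : F}
    (hx : (Qtransform k f).IsRoot x) :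
    (Qtransform k f).IsRoot x⁻¹ := by
  rcases eq_or_ne x 0 with rfl | hx0
  · rwa [inv_zero]
  rw [IsRoot.def, eval_Qtransform_of_ne_zero hk f hx0] at hx
  rw [IsRoot.def, eval_Qtransform_of_ne_zero hk f (inv_ne_zero hx0), inv_inv, add_comm,
    (mul_eq_zero.mp hx).resolve_left (pow_ne_zero _ (div_ne_zero hx0 hk)), mul_zero]

end

theorem Qtransform_zero_not_root_and_roots_inverse_closed_general (p : ℕ) [Fact p.Prime]
    (k : ZMod p) (hk : k ≠ 0)
    (f : Polynomial (ZMod p)) (hmonic : f.Monic) :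
    Polynomial.aeval (0 : AlgebraicClosure (ZMod p)) (Qtransform k f) ≠ 0 ∧
      ∀ γ : AlgebraicClosure (ZMod p),
        Polynomial.aeval γ (Qtransform k f) = 0 →
          Polynomial.aeval γ⁻¹ (Qtransform k f) = 0 := by
  have hk' : algebraMap (ZMod p) (AlgebraicClosure (ZMod p)) k ≠ 0 := by simpa using hk
  simp only [← eval_map_algebraMap, map_Qtransform]
  refine ⟨?_, fun γ hγ => isRoot_inv_of_isRoot_Qtransform hk' hγ⟩
  rw [eval_zero_Qtransform hk', (hmonic.map _).leadingCoeff]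
  exact one_ne_zero

/-- Let `p` be an odd prime, `k ∈ F_p` nonzero, and `f` a monic irreducible
polynomial of degree `n ≥ 1` over `F_p`. Then `0` is not a root of `f^{Q_k}`,
and the set of roots of `f^{Q_k}` in an algebraic closure of `F_p` is closed
under inversion. -/
theorem Qtransform_zero_not_root_and_roots_inverse_closed (p : ℕ) [Fact p.Prime]
    (hodd : Odd p) (k : ZMod p) (hk : k ≠ 0)
    (f : Polynomial (ZMod p)) (hmonic : f.Monic) (hirr : Irreducible f)
    (hn : 1 ≤ f.natDegree) :
    Polynomial.aeval (0 : AlgebraicClosure (ZMod p)) (Qtransform k f) ≠ 0 ∧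
      ∀ γ : AlgebraicClosure (ZMod p),
        Polynomial.aeval γ (Qtransform k f) = 0 →
          Polynomial.aeval γ⁻¹ (Qtransform k f) = 0 :=
  Qtransform_zero_not_root_and_roots_inverse_closed_general p k hk f hmonic
end

section
/- Let p be an odd prime, k ∈ F_p with k ≠ 0, and let f be a monic irreducible polynomial of degree n ≥ 1 over F_p. Then either f^{Q_k} is a monic irreducible polynomial of degree 2n over F_p, or f^{Q_k} is the product of the minimal polynomial over F_p of α and the minimal polynomial over F_p of α⁻¹ for some nonzero α ∈ F_{p^n}, both factors having degree n. -/
open Polynomial IntermediateField Module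

section Qtransform

variable {F : Type*} [Field F]

theorem aeval_Qtransform (k : F) (f : F[X]) {L : Type*} [Field L] [Algebra F L] {α : L}
    (hα : α ≠ 0) :
    aeval α (Qtransform k f) =
      (α / algebraMap F L k) ^ f.natDegree * aeval (algebraMap F L k * (α + α⁻¹)) f := by
  have hsq : α ^ 2 + 1 = α * (α + α⁻¹) := by field_simp
  simp only [Qtransform, map_mul, map_sum, aeval_C, aeval_X, map_pow, map_add, map_one,
    aeval_eq_sum_range (x := algebraMap F L k * _), Finset.mul_sum, Algebra.smul_def]
  refine Finset.sum_congr rfl fun j hj => ?_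
  simp only [hsq, mul_pow, div_pow, map_inv₀]
  rw [← pow_sub_mul_pow α (Nat.lt_succ_iff.mp (Finset.mem_range.mp hj))]
  ring

theorem Qtransform_eq_sum_add_pow {k : F} {f : F[X]} (hk : k ≠ 0) (hf : f.Monic) :
    Qtransform k f = C (k⁻¹ ^ f.natDegree) * ∑ j ∈ Finset.range f.natDegree,
      C (f.coeff j * k ^ j) * (X ^ 2 + 1) ^ j * X ^ (f.natDegree - j) +
      (X ^ 2 + 1) ^ f.natDegree := by
  rw [Qtransform, Finset.sum_range_succ, mul_add, hf.coeff_natDegree, Nat.sub_self, pow_zero,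
    mul_one, one_mul, ← mul_assoc, ← C_mul, inv_pow, inv_mul_cancel₀ (pow_ne_zero _ hk), C_1,
    one_mul]

theorem isMonicOfDegree_Qtransform {k : F} {f : F[X]} (hk : k ≠ 0) (hf : f.Monic) :
    IsMonicOfDegree (Qtransform k f) (2 * f.natDegree) := by
  rw [Qtransform_eq_sum_add_pow hk hf]
  obtain hn | hn := Nat.eq_zero_or_pos f.natDegree
  · simp [hn]
  refine .add_left ?_ (((isMonicOfDegree_X_pow (R := F) 2).add_right (q := 1) (by simp)).pow _)
  refine (natDegree_C_mul_le _ _).trans_lt <| Nat.lt_of_le_sub_one (by omega) <|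
    natDegree_sum_le_of_forall_le _ _ fun j hj => ?_
  have := Finset.mem_range.mp hj
  compute_degree
  omega

theorem coeff_zero_Qtransform {k : F} {f : F[X]} (hk : k ≠ 0) (hf : f.Monic) :
    (Qtransform k f).coeff 0 = 1 := by
  rw [Qtransform_eq_sum_add_pow hk hf, coeff_zero_eq_eval_zero]
  simp only [eval_add, eval_mul, eval_C, eval_finsetSum, eval_pow, eval_X]
  rw [Finset.sum_eq_zero fun j hj => by
    rw [zero_pow (Nat.sub_ne_zero_of_lt (Finset.mem_range.mp hj)), mul_zero]]
  norm_num

end Qtransform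

theorem sq_sub_div_mul_add_one_eq_zero_iff {M : Type*} [Field M] {k x β : M} (hk : k ≠ 0) :
    x ^ 2 - β / k * x + 1 = 0 ↔ x ≠ 0 ∧ k * (x + x⁻¹) = β := by
  constructor
  · intro h
    have hx : x ≠ 0 := by rintro rfl; simp at h
    refine ⟨hx, ?_⟩
    field_simp at h ⊢
    linear_combination h
  · rintro ⟨hx, rfl⟩
    field_simp
    ring

theorem eq_X_sub_C_sq_of_dvd {F : Type*} [Field F] {g : F[X]} {a : F} (hg : IsMonicOfDegree g 2)
    (hdvd : X - C a ∣ g) (h0 : g.coeff 0 = a ^ 2) (ha : a ≠ 0) : g = (X - C a) ^ 2 := by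
  obtain ⟨h, rfl⟩ := hdvd
  obtain ⟨r, rfl⟩ := isMonicOfDegree_one_iff.mp <| (isMonicOfDegree_X_sub_one a).of_mul_left hg
  have hr : r = -a := by
    simp only [mul_coeff_zero, coeff_sub, coeff_X_zero, coeff_C_zero, coeff_add] at h0
    apply mul_left_cancel₀ ha
    linear_combination -h0
  rw [hr, C_neg, ← sub_eq_add_neg, sq]

section FieldExtension

variable {F K : Type*} [Field F] [Field K] [Algebra F K]

theorem exists_algebraMap_eq_of_mul_self_eq_one {α : K} (h : α * α = 1) :
    ∃ a : F, algebraMap F K a = α ∧ a ^ 2 = 1 := by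
  rcases mul_self_eq_one_iff.mp h with rfl | rfl
  · exact ⟨1, map_one _, one_pow _⟩
  · exact ⟨-1, by rw [map_neg, map_one], by norm_num⟩

theorem mul_add_inv_mem_adjoin_simple (k : F) (γ : K) : algebraMap F K k * (γ + γ⁻¹) ∈ F⟮γ⟯ :=
  mul_mem (IntermediateField.algebraMap_mem _ k) <|
    add_mem (mem_adjoin_simple_self F γ) (inv_mem (mem_adjoin_simple_self F γ))

theorem natDegree_minpoly_eq_finrank_of_adjoin_eq_top [FiniteDimensional F K] {γ : K}
    (h : F⟮γ⟯ = ⊤) : (minpoly F γ).natDegree = finrank F K := by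
  rw [← adjoin.finrank (IsIntegral.of_finite F γ), h, finrank_top']

theorem natDegree_minpoly_eq_finrank_of_mul_add_inv_eq [FiniteDimensional F K] {k : F}
    {β γ : K} (hβ : F⟮β⟯ = ⊤) (hγ : algebraMap F K k * (γ + γ⁻¹) = β) :
    (minpoly F γ).natDegree = finrank F K :=
  natDegree_minpoly_eq_finrank_of_adjoin_eq_top <|
    top_le_iff.mp (hβ ▸ adjoin_simple_le_iff.mpr (hγ ▸ mul_add_inv_mem_adjoin_simple k γ))

theorem IntermediateField.eq_top_of_lt_of_finrank_eq_two_mul [FiniteDimensional F K]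
    {E₀ E : IntermediateField F K} (hlt : E₀ < E) (h : finrank F K = 2 * finrank F E₀) :
    E = ⊤ := by
  obtain ⟨m, hm⟩ := finrank_dvd_of_le_right hlt.le
  obtain ⟨m', hm'⟩ := finrank_dvd_of_le_right (le_top : E ≤ ⊤)
  rw [finrank_top', h, hm, mul_assoc] at hm'
  have hm2 : m * m' = 2 := (Nat.eq_of_mul_eq_mul_left finrank_pos (by rw [← hm', mul_comm])).symm
  have hm1 : m ≠ 1 := fun h1 => hlt.ne (eq_of_le_of_finrank_eq hlt.le (by rw [hm, h1, mul_one]))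
  have hm'1 : m' = 1 := by
    have : m ≤ 2 := Nat.le_of_dvd two_pos ⟨m', hm2.symm⟩
    interval_cases m <;> omega
  refine eq_of_le_of_finrank_eq le_top ?_
  rw [finrank_top', h, hm, ← hm2, hm'1]
  ring

theorem eq_inv_of_minpoly_eq_minpoly_inv [Normal F K] {k : F} {α β : K} (hβ : F⟮β⟯ = ⊤)
    (hα : algebraMap F K k * (α + α⁻¹) = β) (h : minpoly F α = minpoly F α⁻¹) : α = α⁻¹ := by
  obtain ⟨σ, hσ⟩ := (Normal.minpoly_eq_iff_mem_orbit K).mp h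
  change σ α⁻¹ = α at hσ
  have hσα : σ α = α⁻¹ := by rw [← inv_inv (σ α), ← map_inv₀, hσ]
  have hσβ : σ β = β := by
    rw [← hα, map_mul, AlgEquiv.commutes, map_add, map_inv₀, hσα, inv_inv, add_comm]
  have hσ1 : (σ : K →ₐ[F] K) = AlgHom.id F K :=
    AlgHom.ext_of_adjoin_eq_top
      ((adjoin_simple_eq_top_iff_of_isAlgebraic (Algebra.IsAlgebraic.isAlgebraic β)).mp hβ)
      (by simpa using hσβ)
  calc α = σ α⁻¹ := hσ.symm
    _ = α⁻¹ := DFunLike.congr_fun hσ1 α⁻¹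

theorem Qtransform_minpoly_eq_minpoly_mul_minpoly_inv [FiniteDimensional F K] [Normal F K]
    {k : F} (hk : k ≠ 0) {α β : K} (hβ : F⟮β⟯ = ⊤) (hα0 : α ≠ 0)
    (hα : algebraMap F K k * (α + α⁻¹) = β) :
    Qtransform k (minpoly F β) = minpoly F α * minpoly F α⁻¹ := by
  have hα' : algebraMap F K k * (α⁻¹ + α⁻¹⁻¹) = β := by rwa [inv_inv, add_comm]
  have hint : ∀ γ : K, IsIntegral F γ := fun γ => IsIntegral.of_finite F γ
  have hQ := isMonicOfDegree_Qtransform hk (minpoly.monic (hint β))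
  have hdeg : ∀ γ : K, algebraMap F K k * (γ + γ⁻¹) = β →
      (minpoly F γ).natDegree = (minpoly F β).natDegree := fun γ hγ => by
    rw [natDegree_minpoly_eq_finrank_of_adjoin_eq_top hβ,
      natDegree_minpoly_eq_finrank_of_mul_add_inv_eq hβ hγ]
  have hdvd : ∀ γ : K, γ ≠ 0 → algebraMap F K k * (γ + γ⁻¹) = β →
      minpoly F γ ∣ Qtransform k (minpoly F β) := fun γ hγ0 hγ =>
    minpoly.dvd F γ (by rw [aeval_Qtransform _ _ hγ0, hγ, minpoly.aeval, mul_zero])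
  by_cases hm : minpoly F α = minpoly F α⁻¹
  · obtain ⟨a, rfl, ha⟩ := exists_algebraMap_eq_of_mul_self_eq_one (F := F) (α := α) <| by
      nth_rw 2 [eq_inv_of_minpoly_eq_minpoly_inv hβ hα hm]
      exact mul_inv_cancel₀ hα0
    have hmin : minpoly F (algebraMap F K a) = X - C a := minpoly.eq_X_sub_C K a
    have hn : (minpoly F β).natDegree = 1 := by rw [← hdeg _ hα, hmin, natDegree_X_sub_C]
    rw [← hm, hmin, ← sq]
    exact eq_X_sub_C_sq_of_dvd (by simpa [hn] using hQ) (hmin ▸ hdvd _ hα0 hα)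
      (by rw [coeff_zero_Qtransform hk (minpoly.monic (hint β)), ha]) (by rintro rfl; simp at ha)
  · have hcop : IsCoprime (minpoly F α) (minpoly F α⁻¹) :=
      (minpoly.irreducible (hint α)).coprime_iff_not_dvd.mpr fun hd => hm <|
        eq_of_monic_of_associated (minpoly.monic (hint α)) (minpoly.monic (hint α⁻¹))
          ((minpoly.irreducible (hint α)).associated_of_dvd (minpoly.irreducible (hint α⁻¹)) hd)
    refine eq_of_monic_of_dvd_of_natDegree_le ((minpoly.monic (hint α)).mul
      (minpoly.monic (hint α⁻¹))) hQ.monic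
      (hcop.mul_dvd (hdvd α hα0 hα) (hdvd α⁻¹ (inv_ne_zero hα0) hα')) ?_
    rw [hQ.natDegree_eq, natDegree_mul (minpoly.ne_zero (hint α)) (minpoly.ne_zero (hint α⁻¹)),
      hdeg α hα, hdeg α⁻¹ hα', two_mul]

theorem Qtransform_minpoly_eq_minpoly_of_finrank_eq_two {L : Type*} [Field L] [Algebra F L]
    [Algebra K L] [IsScalarTower F K L] [FiniteDimensional F K] [FiniteDimensional K L] {k : F}
    (hk : k ≠ 0) {β : K} (hβ : F⟮β⟯ = ⊤) (hL : finrank K L = 2) {α : L} (hα0 : α ≠ 0)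
    (hα : algebraMap F L k * (α + α⁻¹) = algebraMap K L β) (hαK : α ∉ (algebraMap K L).range) :
    Qtransform k (minpoly F β) = minpoly F α := by
  have : FiniteDimensional F L := Module.Finite.trans K L
  have hrange : F⟮algebraMap K L β⟯ = (IsScalarTower.toAlgHom F K L).fieldRange := by
    rw [AlgHom.fieldRange_eq_map, ← hβ, adjoin_map, Set.image_singleton]
    rfl
  have hlt : F⟮algebraMap K L β⟯ < F⟮α⟯ := by
    refine lt_of_le_of_ne (adjoin_simple_le_iff.mpr (hα ▸ mul_add_inv_mem_adjoin_simple k α))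
      fun h => hαK ?_
    exact (hrange ▸ h ▸ mem_adjoin_simple_self F α : α ∈ (IsScalarTower.toAlgHom F K L).fieldRange)
  have hfinβ : finrank F F⟮algebraMap K L β⟯ = finrank F K := by
    rw [adjoin.finrank (IsIntegral.of_finite F _),
      minpoly.algebraMap_eq (algebraMap K L).injective,
      natDegree_minpoly_eq_finrank_of_adjoin_eq_top hβ]
  have hFL : finrank F L = 2 * finrank F K := by
    rw [← Module.finrank_mul_finrank F K L, hL, mul_comm]
  have htop : F⟮α⟯ = ⊤ := eq_top_of_lt_of_finrank_eq_two_mul hlt (hfinβ ▸ hFL)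
  have hQ := isMonicOfDegree_Qtransform hk (minpoly.monic (IsIntegral.of_finite F β))
  refine eq_of_monic_of_dvd_of_natDegree_le (minpoly.monic (IsIntegral.of_finite F α)) hQ.monic
    (minpoly.dvd F α ?_) ?_
  · rw [aeval_Qtransform _ _ hα0, hα, aeval_algebraMap_apply, minpoly.aeval, map_zero, mul_zero]
  · rw [hQ.natDegree_eq, natDegree_minpoly_eq_finrank_of_adjoin_eq_top htop,
      natDegree_minpoly_eq_finrank_of_adjoin_eq_top hβ, hFL]

theorem irreducible_Qtransform_minpoly [FiniteDimensional F K] {k : F} (hk : k ≠ 0) {β : K}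
    (hβ : F⟮β⟯ = ⊤) (hno : ∀ α : K, α ≠ 0 → algebraMap F K k * (α + α⁻¹) ≠ β) :
    Irreducible (Qtransform k (minpoly F β)) := by
  have hk' : algebraMap F K k ≠ 0 := by simpa using hk
  set q : K[X] := X ^ 2 - C (β / algebraMap F K k) * X + C 1
  have hqdeg : q.natDegree = 2 := (isMonicOfDegree_sub_add_two _ _).natDegree_eq
  have hq : Irreducible q := irreducible_of_degree_le_three_of_not_isRoot (by simp [hqdeg])
    fun x hx => by
      obtain ⟨hx0, hxβ⟩ := (sq_sub_div_mul_add_one_eq_zero_iff hk').mp (by simpa [q] using hx)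
      exact hno x hx0 hxβ
  have := Fact.mk hq
  have : FiniteDimensional K (AdjoinRoot q) := (AdjoinRoot.powerBasis hq.ne_zero).finite
  have : FiniteDimensional F (AdjoinRoot q) := Module.Finite.trans K _
  have hqα : AdjoinRoot.root q ^ 2 - algebraMap K (AdjoinRoot q) β /
      algebraMap F (AdjoinRoot q) k * AdjoinRoot.root q + 1 = 0 := by
    have h := AdjoinRoot.aeval_eq (f := q) q
    rw [AdjoinRoot.mk_self] at h
    simpa [q, IsScalarTower.algebraMap_apply F K (AdjoinRoot q)] using h
  obtain ⟨hα0, hα⟩ := (sq_sub_div_mul_add_one_eq_zero_iff (by simpa using hk)).mp hqα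
  rw [Qtransform_minpoly_eq_minpoly_of_finrank_eq_two hk hβ ?_ hα0 hα]
  · exact minpoly.irreducible (IsIntegral.of_finite F _)
  · rintro ⟨x, hx⟩
    have hroot : q.IsRoot x := by
      have h : algebraMap K (AdjoinRoot q) (aeval x q) = 0 := by
        rw [← aeval_algebraMap_apply, hx, AdjoinRoot.aeval_eq, AdjoinRoot.mk_self]
      rwa [map_eq_zero_iff _ (algebraMap K _).injective, coe_aeval_eq_eval] at h
    have := degree_eq_one_of_irreducible_of_root hq hroot
    rw [degree_eq_natDegree hq.ne_zero, hqdeg] at this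
    norm_num at this
  · rw [(AdjoinRoot.powerBasis hq.ne_zero).finrank, AdjoinRoot.powerBasis_dim, hqdeg]

end FieldExtension

theorem GaloisField.exists_minpoly_eq {p : ℕ} [Fact p.Prime] {f : (ZMod p)[X]} (hf : f.Monic)
    (hirr : Irreducible f) : ∃ β : GaloisField p f.natDegree, minpoly (ZMod p) β = f := by
  have := Fact.mk hirr
  obtain ⟨φ⟩ := FiniteField.nonempty_algHom_of_finrank_dvd (F := ZMod p) (K := AdjoinRoot f)
    (L := GaloisField p f.natDegree) <| by
      rw [(AdjoinRoot.powerBasis hf.ne_zero).finrank, AdjoinRoot.powerBasis_dim,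
        GaloisField.finrank p hirr.natDegree_pos.ne']
  exact ⟨φ (AdjoinRoot.root f), (minpoly.eq_of_irreducible_of_monic hirr
    (by rw [aeval_algHom_apply, AdjoinRoot.aeval_eq, AdjoinRoot.mk_self, map_zero]) hf).symm⟩

theorem Qtransform_irreducible_or_splits_general (p : ℕ) [Fact p.Prime]
    (k : ZMod p) (hk : k ≠ 0)
    (f : Polynomial (ZMod p)) (hmonic : f.Monic) (hirr : Irreducible f) :
    ((Qtransform k f).Monic ∧ Irreducible (Qtransform k f) ∧
        (Qtransform k f).natDegree = 2 * f.natDegree) ∨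
      (∃ α : GaloisField p f.natDegree, α ≠ 0 ∧
        Qtransform k f = minpoly (ZMod p) α * minpoly (ZMod p) α⁻¹ ∧
        (minpoly (ZMod p) α).natDegree = f.natDegree ∧
        (minpoly (ZMod p) α⁻¹).natDegree = f.natDegree) := by
  obtain ⟨β, hmin⟩ := GaloisField.exists_minpoly_eq hmonic hirr
  have hrank := GaloisField.finrank p hirr.natDegree_pos.ne'
  have hβ : (ZMod p)⟮β⟯ = ⊤ := eq_of_le_of_finrank_eq le_top <| by
    rw [adjoin.finrank (IsIntegral.of_finite _ β), hmin, finrank_top', hrank]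
  by_cases h : ∃ α : GaloisField p f.natDegree, α ≠ 0 ∧ algebraMap (ZMod p) _ k * (α + α⁻¹) = β
  · obtain ⟨α, hα0, hα⟩ := h
    have hα' : algebraMap (ZMod p) _ k * (α⁻¹ + α⁻¹⁻¹) = β := by rwa [inv_inv, add_comm]
    have hsplit := Qtransform_minpoly_eq_minpoly_mul_minpoly_inv hk hβ hα0 hα
    rw [hmin] at hsplit
    refine .inr ⟨α, hα0, hsplit, ?_, ?_⟩
    · rw [natDegree_minpoly_eq_finrank_of_mul_add_inv_eq hβ hα, hrank]
    · rw [natDegree_minpoly_eq_finrank_of_mul_add_inv_eq hβ hα', hrank]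
  · simp only [not_exists, not_and] at h
    have hirrQ := irreducible_Qtransform_minpoly hk hβ h
    rw [hmin] at hirrQ
    have hQ := isMonicOfDegree_Qtransform hk hmonic
    exact .inl ⟨hQ.monic, hirrQ, hQ.natDegree_eq⟩

/-- Let `p` be an odd prime, `k ∈ F_p` nonzero, and `f` a monic irreducible
polynomial of degree `n ≥ 1` over `F_p`. Then either `f^{Q_k}` is a monic
irreducible polynomial of degree `2n` over `F_p`, or `f^{Q_k}` is the product
of the minimal polynomials over `F_p` of `α` and of `α⁻¹` for some nonzero
`α ∈ F_{p^n}`, both factors having degree `n`. -/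
theorem Qtransform_irreducible_or_splits (p : ℕ) [Fact p.Prime]
    (hodd : Odd p) (k : ZMod p) (hk : k ≠ 0)
    (f : Polynomial (ZMod p)) (hmonic : f.Monic) (hirr : Irreducible f)
    (hn : 1 ≤ f.natDegree) :
    ((Qtransform k f).Monic ∧ Irreducible (Qtransform k f) ∧
        (Qtransform k f).natDegree = 2 * f.natDegree) ∨
      (∃ α : GaloisField p f.natDegree, α ≠ 0 ∧
        Qtransform k f = minpoly (ZMod p) α * minpoly (ZMod p) α⁻¹ ∧
        (minpoly (ZMod p) α).natDegree = f.natDegree ∧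
        (minpoly (ZMod p) α⁻¹).natDegree = f.natDegree) :=
  Qtransform_irreducible_or_splits_general p k hk f hmonic hirr
end

section
/- Let p be a prime with p ≡ 1 (mod 4), and let k ∈ F_p satisfy k² = -1/4. Let f be a monic irreducible polynomial of degree n ≥ 1 over F_p, and suppose f^{Q_k} is not irreducible over F_p, so that f^{Q_k} is the product of the minimal polynomials over F_p of α and of α⁻¹ for some nonzero α ∈ F_{p^n}. Then at least one of α and α⁻¹ is not θ_k-periodic. -/
/-! `θ_k(x) = θ_k(x⁻¹)` and `θ_k` is injective on its periodic points, so `α` and `α⁻¹`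
can both be periodic only if `α = α⁻¹`, i.e. `α ∈ {0, ±1}`. These points are never periodic:
`0 ↦ ∞`, which is fixed, and `k² = -1/4` makes `c = ±2k` satisfy `c² = -1` (or `c = 0` in
characteristic 2), so `±1 ↦ c ↦ k (c + c⁻¹) = 0 ↦ ∞`. -/

theorem Function.eq_of_mem_periodicPts_of_iterate_eq_isFixedPt {α : Type*} {f : α → α}
    {x y : α} {m : ℕ} (hx : x ∈ Function.periodicPts f) (hy : Function.IsFixedPt f y)
    (h : f^[m] x = y) : x = y := by
  have hfix : Function.IsFixedPt f x :=
    (Function.isPeriodicPt_of_mem_periodicPts_of_isPeriodicPt_iterate hx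
      (h ▸ hy.isPeriodicPt 1) : Function.IsPeriodicPt f 1 x)
  rw [← h, (hfix.iterate m).eq]

section Theta

variable {F : Type*} [Field F] (k : F)

theorem isThetaPeriodic_iff_mem_periodicPts (y : Option F) :
    IsThetaPeriodic k y ↔ y ∈ Function.periodicPts (theta k) :=
  Iff.rfl

theorem isFixedPt_theta_none : Function.IsFixedPt (theta k) none :=
  rfl

theorem theta_some_of_ne_zero {x : F} (hx : x ≠ 0) :
    theta k (some x) = some (k * (x + x⁻¹)) := by
  simp [theta, hx]

theorem theta_some_zero : theta k (some 0) = none := by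
  simp [theta]

theorem theta_some_inv (x : F) : theta k (some x⁻¹) = theta k (some x) := by
  rcases eq_or_ne x 0 with rfl | hx
  · rw [inv_zero]
  · rw [theta_some_of_ne_zero k hx, theta_some_of_ne_zero k (inv_ne_zero hx), inv_inv, add_comm]

theorem theta_theta_some_of_mul_add_inv_eq_zero {y : F} (h : k * (y + y⁻¹) = 0) :
    theta k (theta k (some y)) = none := by
  rcases eq_or_ne y 0 with rfl | hy
  · rw [theta_some_zero]
    rfl
  · rw [theta_some_of_ne_zero k hy, h, theta_some_zero]

variable {k}

theorem mul_add_inv_eq_zero_of_sq_eq (hk : k ^ 2 = -(1 / 4)) {c : F} (hc : c ^ 2 = 4 * k ^ 2) :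
    k * (c + c⁻¹) = 0 := by
  rcases eq_or_ne k 0 with rfl | hk0
  · rw [zero_mul]
  have h4 : (4 : F) ≠ 0 := by
    rintro h4
    rw [h4, div_zero, neg_zero] at hk
    exact hk0 (pow_eq_zero_iff two_ne_zero |>.mp hk)
  have hc2 : c * c = -1 := by rw [← sq, hc, hk]; field_simp
  rw [inv_eq_of_mul_eq_one_right (by rw [mul_neg, hc2, neg_neg] : c * -c = 1), add_neg_cancel,
    mul_zero]

theorem theta_iterate_three_of_inv_eq_self (hk : k ^ 2 = -(1 / 4)) {x : F} (hx : x⁻¹ = x) :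
    (theta k)^[3] (some x) = none := by
  rcases eq_or_ne x 0 with rfl | hx0
  · rw [Function.iterate_succ_apply, theta_some_zero]
    exact Function.iterate_fixed (isFixedPt_theta_none k) 2
  have hxx : x * x = 1 := by nth_rw 2 [← hx]; exact mul_inv_cancel₀ hx0
  have hc : (k * (x + x⁻¹)) ^ 2 = 4 * k ^ 2 := by
    rw [hx]; linear_combination (4 * k ^ 2) * hxx
  rw [Function.iterate_succ_apply, theta_some_of_ne_zero k hx0, Function.iterate_succ_apply,
    Function.iterate_one,
    theta_theta_some_of_mul_add_inv_eq_zero k (mul_add_inv_eq_zero_of_sq_eq hk hc)]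

theorem not_isThetaPeriodic_of_inv_eq_self (hk : k ^ 2 = -(1 / 4)) {x : F} (hx : x⁻¹ = x) :
    ¬ IsThetaPeriodic k (some x) := fun hper =>
  Option.some_ne_none x <| Function.eq_of_mem_periodicPts_of_iterate_eq_isFixedPt
    ((isThetaPeriodic_iff_mem_periodicPts k _).mp hper)
    (isFixedPt_theta_none k) (theta_iterate_three_of_inv_eq_self hk hx)

end Theta

theorem not_periodic_of_Qtransform_reducible_general (p n : ℕ) [Fact p.Prime]
    (k : ZMod p) (hk : k ^ 2 = -(1 / 4))
    (α : GaloisField p n) :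
    ¬ IsThetaPeriodic (algebraMap (ZMod p) (GaloisField p n) k) (some α) ∨
      ¬ IsThetaPeriodic (algebraMap (ZMod p) (GaloisField p n) k) (some α⁻¹) := by
  set K := algebraMap (ZMod p) (GaloisField p n) k
  have hK : K ^ 2 = -(1 / 4) := by
    simp only [K, ← map_pow, hk, map_neg, map_div₀, map_one, map_ofNat]
  rw [or_iff_not_imp_left, not_not]
  intro hα hα_inv
  have hsome : some α⁻¹ = some α :=
    (Function.bijOn_periodicPts (theta K)).injOn
      ((isThetaPeriodic_iff_mem_periodicPts K _).mp hα_inv)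
      ((isThetaPeriodic_iff_mem_periodicPts K _).mp hα) (theta_some_inv K α)
  exact not_isThetaPeriodic_of_inv_eq_self hK (Option.some_injective _ hsome) hα

/-- Let `p ≡ 1 (mod 4)` be a prime and `k ∈ F_p` with `k² = -1/4`. Let `f` be
a monic irreducible polynomial of degree `n ≥ 1` over `F_p`, and suppose
`f^{Q_k}` is not irreducible, so that `f^{Q_k}` is the product of the minimal
polynomials over `F_p` of `α` and of `α⁻¹` for some nonzero `α ∈ F_{p^n}`.
Then at least one of `α`, `α⁻¹` is not `θ_k`-periodic. -/
theorem not_periodic_of_Qtransform_reducible (p n : ℕ) [Fact p.Prime]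
    (hp4 : p % 4 = 1) (k : ZMod p) (hk : k ^ 2 = -(1 / 4))
    (f : Polynomial (ZMod p)) (hmonic : f.Monic) (hirr : Irreducible f)
    (hdeg : f.natDegree = n) (hn : 1 ≤ n)
    (hred : ¬ Irreducible (Qtransform k f))
    (α : GaloisField p n) (hα : α ≠ 0)
    (hfact : Qtransform k f = minpoly (ZMod p) α * minpoly (ZMod p) α⁻¹) :
    ¬ IsThetaPeriodic (algebraMap (ZMod p) (GaloisField p n) k) (some α) ∨
      ¬ IsThetaPeriodic (algebraMap (ZMod p) (GaloisField p n) k) (some α⁻¹) :=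
  not_periodic_of_Qtransform_reducible_general p n k hk α
end

section
/- Let K = ℚ(√-7), let O_K be its ring of integers, and let α ∈ O_K satisfy α² - α + 2 = 0. Let w ∈ O_K. If α divides w - 1 but α² does not divide w - 1, then α² divides w + 1. -/
open Module NumberField

/-- A root of `x² - x + 2` in a degree-2 number field has norm `2`. -/
lemma norm_root_eq_two (K : Type*) [Field K] [NumberField K]
    (hdeg : Module.finrank ℚ K = 2) (x : K) (hx : x ^ 2 - x + 2 = 0) :
    Algebra.norm ℚ x = 2 := by
  classical
  have hnotrat : ∀ q : ℚ, x ≠ (q : K) := by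
    intro q hq
    have hq2 : (q : K) ^ 2 - q + 2 = 0 := by rw [← hq]; exact hx
    have : ((q ^ 2 - q + 2 : ℚ) : K) = 0 := by push_cast; linear_combination hq2
    have h0 : (q ^ 2 - q + 2 : ℚ) = 0 := by exact_mod_cast this
    nlinarith [sq_nonneg (q - 1/2)]
  have li : LinearIndependent ℚ ![(1 : K), x] := by
    rw [LinearIndependent.pair_iff]
    intro s t hst
    by_cases ht : t = 0
    · subst ht
      simp only [smul_eq_mul, mul_one, zero_smul, add_zero] at hst
      refine ⟨?_, rfl⟩
      have : ((s : K)) = 0 := by rw [← Rat.smul_one_eq_cast]; simpa using hst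
      exact_mod_cast this
    · exfalso
      apply hnotrat (-(t⁻¹ * s))
      have h := congrArg (fun y : K => (t⁻¹ : ℚ) • y) hst
      simp only [smul_add, smul_smul, smul_zero, inv_mul_cancel₀ ht, one_smul] at h
      have hxe : x = -((t⁻¹ * s) • (1 : K)) := eq_neg_of_add_eq_zero_right h
      rw [hxe, Rat.smul_one_eq_cast]
      push_cast
      ring
  have hcard : Fintype.card (Fin 2) = finrank ℚ K := by simp [hdeg]
  let b : Basis (Fin 2) ℚ K := basisOfLinearIndependentOfCardEqFinrank li hcard
  have hb : ⇑b = ![(1 : K), x] := coe_basisOfLinearIndependentOfCardEqFinrank li hcard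
  have hb0 : b 0 = 1 := by rw [hb]; rfl
  have hb1 : b 1 = x := by rw [hb]; rfl
  rw [Algebra.norm_eq_matrix_det b x]
  have r0 : b.repr (x * b 0) = Finsupp.single 1 1 := by
    rw [hb0, mul_one, ← hb1, b.repr_self]
  have r1 : b.repr (x * b 1) = Finsupp.single 0 (-2) + Finsupp.single 1 1 := by
    have hx2 : x * b 1 = (-2 : ℚ) • b 0 + (1 : ℚ) • b 1 := by
      rw [hb0, hb1, Rat.smul_one_eq_cast, one_smul]
      push_cast
      linear_combination hx
    rw [hx2, map_add, map_smul, map_smul, b.repr_self, b.repr_self,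
      Finsupp.smul_single, Finsupp.smul_single]
    norm_num
  have hM : Algebra.leftMulMatrix b x = !![0, -2; 1, 1] := by
    ext i j
    rw [Algebra.leftMulMatrix_eq_repr_mul]
    fin_cases i <;> fin_cases j <;>
      simp [r0, r1, Finsupp.single_apply]
  rw [hM, Matrix.det_fin_two_of]
  norm_num

/-- In a commutative ring where the quotient by `(α)` has exactly two elements,
any `t` not divisible by `α` satisfies `α ∣ t + 1`. -/
lemma dvd_add_one_of_card_quot_two (O : Type*) [CommRing O] (α t : O)
    (hn : Nat.card (O ⧸ Ideal.span {α}) = 2)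
    (hα : ¬ α ∣ t) : α ∣ t + 1 := by
  set R := O ⧸ Ideal.span {α} with hR
  have h01 : (0 : R) ≠ 1 := by
    intro h
    have : Subsingleton R := subsingleton_iff_zero_eq_one.mp h
    rw [Nat.card_of_subsingleton (0 : R)] at hn
    omega
  obtain ⟨y, hy, huniq⟩ := (Nat.card_eq_two_iff' (0 : R)).mp hn
  have ht : (Ideal.Quotient.mk (Ideal.span {α}) t : R) ≠ 0 := by
    rw [Ne, Ideal.Quotient.eq_zero_iff_dvd]; exact hα
  have hneg : (-1 : R) ≠ 0 := by
    intro h; exact h01 (by rw [← neg_neg (1 : R), h, neg_zero])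
  have heq := (huniq _ ht).trans (huniq _ hneg).symm
  rw [← Ideal.Quotient.eq_zero_iff_dvd, map_add, map_one, heq]
  ring

/-- Let `K = ℚ(√-7)` (a number field of degree `2` over `ℚ` containing a
square root of `-7`), `O_K` its ring of integers, and `α ∈ O_K` with
`α² - α + 2 = 0`. If `w ∈ O_K`, `α ∣ w - 1` and `α² ∤ w - 1`, then
`α² ∣ w + 1`. -/
theorem alpha_sq_dvd_add_one (K : Type*) [Field K] [NumberField K]
    (hdeg : Module.finrank ℚ K = 2) (hs : ∃ s : K, s ^ 2 = -7)
    (α : NumberField.RingOfIntegers K) (hα : α ^ 2 - α + 2 = 0)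
    (w : NumberField.RingOfIntegers K)
    (h1 : α ∣ w - 1) (h2 : ¬ α ^ 2 ∣ w - 1) :
    α ^ 2 ∣ w + 1 := by
  let O := NumberField.RingOfIntegers K
  -- push the polynomial relation to K
  have hαK : (algebraMap O K α) ^ 2 - (algebraMap O K α) + 2 = 0 := by
    have h := congrArg (algebraMap O K) hα
    simp only [map_add, map_sub, map_pow, map_ofNat, map_zero] at h
    exact h
  -- norm of α is 2
  have hnormQ : Algebra.norm ℚ (algebraMap O K α) = 2 :=
    norm_root_eq_two K hdeg _ hαK
  have hnormZ : Algebra.norm ℤ α = 2 := by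
    have hl := Algebra.norm_localization (Rₘ := ℚ) (Sₘ := K) ℤ (nonZeroDivisors ℤ) α
    rw [hl, algebraMap_int_eq, eq_intCast] at hnormQ
    exact_mod_cast hnormQ
  -- the quotient by (α) has two elements
  have hcardQ : Nat.card (O ⧸ Ideal.span {α}) = 2 := by
    have h := Ideal.absNorm_span_singleton α
    rw [hnormZ] at h
    rw [← Submodule.cardQuot_apply, ← Ideal.absNorm_apply, h]
    rfl
  -- write w - 1 = α * t with α ∤ t
  obtain ⟨t, ht⟩ := h1
  have hαt : ¬ α ∣ t := by
    rintro ⟨u, hu⟩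
    exact h2 ⟨u, by rw [ht, hu]; ring⟩
  -- α ∣ t + 1
  obtain ⟨s, hs'⟩ := dvd_add_one_of_card_quot_two O α t hcardQ hαt
  exact ⟨s - 1, by linear_combination ht + α * hs' + hα⟩
end

section
/- Let K = ℚ(√-7), let O_K be its ring of integers, and let α ∈ O_K satisfy α² - α + 2 = 0. Let π ∈ O_K with α ∤ π, π ≠ 1 and π ≠ -1. Then for every integer m ≥ 1 and every integer i ≥ 1, ν_α(π^{2^{i+1} m} - 1) = ν_α(π^{2^i m} - 1) + 1, where ν_α(w) denotes the largest integer e ≥ 0 such that α^e divides w, for nonzero w ∈ O_K. -/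
/-!
Put `y = π ^ (2 ^ (i - 1) * m)`. The ideal `(α)` has norm `2`, so `𝓞 K ⧸ (α) ≅ 𝔽₂` and
`y ≡ 1 mod α`; hence `α ^ 2 ∣ y ^ 2 - 1`. Since `2 = α (1 - α)` with `1 - α` prime to `α`,
`y ^ 2 + 1 = (y ^ 2 - 1) + 2` has `α`-valuation exactly `1`, and
`ν(y ^ 4 - 1) = ν(y ^ 2 - 1) + ν(y ^ 2 + 1)`. This needs `y ^ 4 ≠ 1`, which holds because the
same congruences leave `±1` as the only roots of unity in `𝓞 K`.
-/

open Module NumberField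

section Residue

variable {R : Type*} [CommRing R] {α : R}

theorem sq_dvd_sq_sub_one (h2 : α ∣ 2) {y : R} (hy : α ∣ y - 1) : α ^ 2 ∣ y ^ 2 - 1 := by
  have hy' : α ∣ y + 1 := by
    convert dvd_add hy h2 using 1
    ring
  rw [show y ^ 2 - 1 = (y - 1) * (y + 1) by ring, sq]
  exact mul_dvd_mul hy hy'

theorem not_sq_dvd_two [IsDomain R] (hα0 : α ≠ 0) (hα : α ^ 2 - α + 2 = 0) (hu : ¬IsUnit α) :
    ¬α ^ 2 ∣ 2 := by
  rintro ⟨c, hc⟩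
  have h : 1 - α = α * c := mul_left_cancel₀ hα0 (by linear_combination hc - hα)
  exact hu (isUnit_of_dvd_one ⟨c + 1, by linear_combination h⟩)

theorem not_dvd_natCast_of_odd (hu : ¬IsUnit α) (h2 : α ∣ 2) {n : ℕ} (hn : Odd n) :
    ¬α ∣ (n : R) := by
  obtain ⟨k, rfl⟩ := hn
  intro h
  refine hu (isUnit_of_dvd_one ?_)
  simpa using dvd_sub h (h2.mul_right k)

theorem sq_ne_neg_one (h2 : α ∣ 2) (h2' : ¬α ^ 2 ∣ 2) {ζ : R} (hζ : α ∣ ζ - 1) : ζ ^ 2 ≠ -1 := by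
  intro h
  have := sq_dvd_sq_sub_one h2 hζ
  rw [h, show (-1 - 1 : R) = -2 by ring, dvd_neg] at this
  exact h2' this

-- The geometric sum `∑ ζ ^ j` vanishes when `ζ ≠ 1`, but is congruent to `n` modulo `α`.
theorem eq_one_of_pow_eq_one [IsDomain R] {ζ : R} (hζ : α ∣ ζ - 1) {n : ℕ} (hn : ¬α ∣ (n : R))
    (h : ζ ^ n = 1) : ζ = 1 := by
  by_contra hne
  have hsum : ∑ j ∈ Finset.range n, ζ ^ j = 0 := by
    refine (mul_eq_zero.1 ?_).resolve_right (sub_ne_zero.2 hne)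
    rw [geom_sum_mul, h, sub_self]
  have hcong : α ∣ ∑ j ∈ Finset.range n, (ζ ^ j - 1) :=
    Finset.dvd_sum fun j _ => hζ.trans (by simpa using sub_dvd_pow_sub_pow ζ 1 j)
  rw [Finset.sum_sub_distrib, hsum] at hcong
  exact hn (by simpa using hcong)

theorem eq_one_or_eq_neg_one_of_pow_eq_one [IsDomain R] (hu : ¬IsUnit α) (h2 : α ∣ 2)
    (h2' : ¬α ^ 2 ∣ 2) (hres : ∀ w : R, α ∣ w ∨ α ∣ w - 1) {n : ℕ} (hn : n ≠ 0) {ζ : R}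
    (h : ζ ^ n = 1) : ζ = 1 ∨ ζ = -1 := by
  induction n using Nat.strong_induction_on generalizing ζ with
  | _ n ih =>
  have hζ : α ∣ ζ - 1 := (hres ζ).resolve_left fun hd =>
    hu (isUnit_of_dvd_one (h ▸ hd.pow hn))
  rcases Nat.even_or_odd n with ⟨k, rfl⟩ | hodd
  · have hk : (ζ ^ 2) ^ k = 1 := by rw [← pow_mul, two_mul, h]
    rcases ih k (by omega) (by omega) hk with h1 | h1
    · exact sq_eq_one_iff.1 h1
    · exact absurd h1 (sq_ne_neg_one h2 h2' hζ)
  · exact .inl (eq_one_of_pow_eq_one hζ (not_dvd_natCast_of_odd hu h2 hodd) h)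

-- `x + 1 = (x - 1) + 2` has `α`-valuation exactly one.
theorem multiplicity_sq_sub_one [IsDomain R] [WfDvdMonoid R] (hp : Prime α) (h2 : α ∣ 2)
    (h2' : ¬α ^ 2 ∣ 2) {x : R} (hx : α ^ 2 ∣ x - 1) (hx2 : x ^ 2 ≠ 1) :
    multiplicity α (x ^ 2 - 1) = multiplicity α (x - 1) + 1 := by
  have hx' : α ∣ x + 1 := by
    convert dvd_add ((dvd_pow_self α two_ne_zero).trans hx) h2 using 1
    ring
  have hx'' : ¬α ^ 2 ∣ x + 1 := fun hd => h2' <| by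
    convert dvd_sub hd hx using 1
    ring
  have hfac : x ^ 2 - 1 = (x - 1) * (x + 1) := by ring
  have hfin : FiniteMultiplicity α ((x - 1) * (x + 1)) :=
    hfac ▸ FiniteMultiplicity.of_not_isUnit hp.not_isUnit (sub_ne_zero.2 hx2)
  rw [hfac, multiplicity_mul hp hfin,
    multiplicity_eq_of_dvd_of_not_dvd (by simpa using hx') hx'']

end Residue

theorem linearIndependent_one_of_notMem_range {F L : Type*} [Field F] [Field L] [Algebra F L]
    {x : L} (hx : x ∉ Set.range (algebraMap F L)) : LinearIndependent F ![1, x] := by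
  refine LinearIndependent.pair_iff.2 fun s t hst => ?_
  obtain rfl | ht := eq_or_ne t 0
  · simpa using hst
  · refine absurd ⟨-s / t, ?_⟩ hx
    rw [Algebra.smul_def, Algebra.smul_def, mul_one] at hst
    rw [map_div₀, map_neg, div_eq_iff ((map_ne_zero _).2 ht)]
    linear_combination -hst

theorem Algebra.norm_eq_of_finrank_eq_two {F L : Type*} [Field F] [Field L] [Algebra F L]
    (hL : finrank F L = 2) {x : L} (hx : x ∉ Set.range (algebraMap F L)) {t n : F}
    (hq : x ^ 2 - algebraMap F L t * x + algebraMap F L n = 0) : Algebra.norm F x = n := by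
  let b := basisOfLinearIndependentOfCardEqFinrank (linearIndependent_one_of_notMem_range hx)
    (by simp [hL])
  have hb : ⇑b = ![1, x] := coe_basisOfLinearIndependentOfCardEqFinrank _ _
  have hb0 : x * b 0 = b 1 := by simp [hb]
  have hb1 : x * b 1 = (-n) • b 0 + t • b 1 := by
    simp only [hb, Matrix.cons_val_zero, Matrix.cons_val_one, Algebra.smul_def, map_neg]
    linear_combination hq
  have hM : Algebra.leftMulMatrix b x = !![0, -n; 1, t] := by
    ext i j
    fin_cases i <;> fin_cases j <;> simp [Algebra.leftMulMatrix_eq_repr_mul, hb0, hb1]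
  rw [Algebra.norm_eq_matrix_det b, hM, Matrix.det_fin_two_of]
  ring

theorem absNorm_span_eq_two_of_sq_sub_add_two_eq_zero {K : Type*} [Field K] [NumberField K]
    (hK : finrank ℚ K = 2) {α : 𝓞 K} (hα : α ^ 2 - α + 2 = 0) :
    Ideal.absNorm (Ideal.span {α}) = 2 := by
  have hαK : (α : K) ^ 2 - algebraMap ℚ K 1 * α + algebraMap ℚ K 2 = 0 := by
    simpa [map_ofNat] using congrArg (algebraMap (𝓞 K) K) hα
  have hirr : (α : K) ∉ Set.range (algebraMap ℚ K) := by
    rintro ⟨q, hq⟩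
    have : q ^ 2 - q + 2 = 0 := by
      rw [← hq] at hαK
      exact (algebraMap ℚ K).injective (by simpa using hαK)
    nlinarith [sq_nonneg (2 * q - 1)]
  have hnorm : Algebra.norm ℤ α = 2 := by
    exact_mod_cast (Algebra.coe_norm_int α).trans (Algebra.norm_eq_of_finrank_eq_two hK hirr hαK)
  rw [Ideal.absNorm_span_singleton, hnorm]
  rfl

theorem eq_zero_or_eq_one_of_card_eq_two {A : Type*} [Ring A] (hA : Nat.card A = 2) (a : A) :
    a = 0 ∨ a = 1 := by
  obtain ⟨u, -, hu⟩ := (Nat.card_eq_two_iff' (0 : A)).1 hA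
  have : Finite A := Nat.finite_of_card_ne_zero (by omega)
  have : Nontrivial A := Finite.one_lt_card_iff_nontrivial.1 (by omega)
  exact or_iff_not_imp_left.2 fun ha => (hu a ha).trans (hu 1 one_ne_zero).symm

theorem dvd_or_dvd_sub_one_of_absNorm_eq_two {S : Type*} [CommRing S] [IsDedekindDomain S]
    [Free ℤ S] {α : S} (hα : Ideal.absNorm (Ideal.span {α}) = 2) (w : S) :
    α ∣ w ∨ α ∣ w - 1 := by
  rw [Ideal.absNorm_apply, Submodule.cardQuot_apply] at hα
  simpa only [← Ideal.mem_span_singleton, ← Ideal.Quotient.eq_zero_iff_mem, map_sub, map_one,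
    sub_eq_zero] using eq_zero_or_eq_one_of_card_eq_two hα (Ideal.Quotient.mk _ w)

theorem nu_alpha_pow_doubling_general (K : Type*) [Field K] [NumberField K]
    (hdeg : Module.finrank ℚ K = 2)
    (α : NumberField.RingOfIntegers K) (hα : α ^ 2 - α + 2 = 0)
    (π : NumberField.RingOfIntegers K) (hπ : ¬ α ∣ π)
    (h1 : π ≠ 1) (hm1 : π ≠ -1)
    (m i : ℕ) (hm : 1 ≤ m) (hi : 1 ≤ i) :
    multiplicity α (π ^ (2 ^ (i + 1) * m) - 1) =
      multiplicity α (π ^ (2 ^ i * m) - 1) + 1 := by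
  have hα0 : α ≠ 0 := by
    rintro rfl
    exact two_ne_zero (show (2 : 𝓞 K) = 0 by linear_combination hα)
  have hnorm := absNorm_span_eq_two_of_sq_sub_add_two_eq_zero hdeg hα
  have hp : Prime α := Ideal.prime_of_irreducible_absNorm_span hα0 (hnorm ▸ Nat.prime_two)
  have hres := dvd_or_dvd_sub_one_of_absNorm_eq_two hnorm
  have h2 : α ∣ 2 := ⟨1 - α, by linear_combination hα⟩
  have h2' := not_sq_dvd_two hα0 hα hp.not_isUnit
  obtain ⟨j, rfl⟩ : ∃ j, i = j + 1 := ⟨i - 1, by omega⟩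
  set y := π ^ (2 ^ j * m)
  have hy1 : π ^ (2 ^ (j + 1) * m) = y ^ 2 := by rw [← pow_mul]; ring_nf
  have hy2 : π ^ (2 ^ (j + 1 + 1) * m) = (y ^ 2) ^ 2 := by rw [← pow_mul, ← pow_mul]; ring_nf
  have hy : α ∣ y - 1 := (hres y).resolve_left fun hd => hπ (hp.dvd_of_dvd_pow hd)
  have hne : (y ^ 2) ^ 2 ≠ 1 := by
    rw [← hy2]
    intro h
    rcases eq_one_or_eq_neg_one_of_pow_eq_one hp.not_isUnit h2 h2' hres (by positivity) h with h | h
    exacts [h1 h, hm1 h]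
  rw [hy1, hy2]
  exact multiplicity_sq_sub_one hp h2 h2' (sq_dvd_sq_sub_one h2 hy) hne

/-- Let `K = ℚ(√-7)` (a number field of degree `2` over `ℚ` containing a
square root of `-7`), `O_K` its ring of integers, and `α ∈ O_K` with
`α² - α + 2 = 0`. Let `π ∈ O_K` with `α ∤ π`, `π ≠ 1` and `π ≠ -1`. Then for
every `m ≥ 1` and every `i ≥ 1`,
`ν_α(π^{2^{i+1} m} - 1) = ν_α(π^{2^i m} - 1) + 1`, where `ν_α(w)` (here
`multiplicity α w`) is the largest `e ≥ 0` with `α^e ∣ w`, for nonzero `w`. -/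
theorem nu_alpha_pow_doubling (K : Type*) [Field K] [NumberField K]
    (hdeg : Module.finrank ℚ K = 2) (hs : ∃ s : K, s ^ 2 = -7)
    (α : NumberField.RingOfIntegers K) (hα : α ^ 2 - α + 2 = 0)
    (π : NumberField.RingOfIntegers K) (hπ : ¬ α ∣ π)
    (h1 : π ≠ 1) (hm1 : π ≠ -1)
    (m i : ℕ) (hm : 1 ≤ m) (hi : 1 ≤ i) :
    multiplicity α (π ^ (2 ^ (i + 1) * m) - 1) =
      multiplicity α (π ^ (2 ^ i * m) - 1) + 1 :=
  nu_alpha_pow_doubling_general K hdeg α hα π hπ h1 hm1 m i hm hi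
end
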